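/- arXiv:2203.09571 — 2 statements merged into one kernel-verified Lean document; each statement's English description precedes it below -/
import Mathlib

section
/- Let R, R_1,…,R_K be Hermitian PSD M×M matrices with R − Σ_{k=1}^K R_k PSD, and h_k ∈ ℂ^M with h_k^H R_k h_k ≠ 0. With w_k = (h_k^H R_k h_k)^{-1/2} R_k h_k and W_c the matrix with columns w_k, the matrix R − W_c W_c^H is positive semidefinite, and hence admits a factorization R − W_c W_c^H = W_r W_r^H for some W_r ∈ ℂ^{M×M}. -/
open Matrix ComplexOrder

/-!
By Cauchy–Schwarz for the semi-inner product `xᴴ R_k y`, `|w_kᴴ x|² ≤ xᴴ R_k x`, i.e.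
`R_k - w_k w_kᴴ` is positive semidefinite. Summing over `k` and adding `R - Σ R_k` shows that
`R - W_c W_cᴴ = (R - Σ R_k) + Σ (R_k - w_k w_kᴴ)` is positive semidefinite, and a positive
semidefinite matrix is `W Wᴴ` for some `W` (e.g. its square root).
-/

namespace Matrix

variable {m n 𝕜 : Type*} [Fintype n] [RCLike 𝕜] {A : Matrix n n 𝕜}

theorem PosSemidef.norm_dotProduct_mulVec_sq_le (hA : A.PosSemidef) (x y : n → 𝕜) :
    ‖star x ⬝ᵥ A *ᵥ y‖ ^ 2 ≤
      RCLike.re (star x ⬝ᵥ A *ᵥ x) * RCLike.re (star y ⬝ᵥ A *ᵥ y) := by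
  let := A.toSeminormedAddCommGroup hA
  let := A.toInnerProductSpace hA
  have hinner (u v : n → 𝕜) : inner 𝕜 u v = star u ⬝ᵥ A *ᵥ v := dotProduct_comm _ _
  have := inner_mul_inner_self_le (𝕜 := 𝕜) x y
  rwa [norm_inner_symm y x, ← sq, hinner, hinner, hinner] at this

theorem star_dotProduct_vecMulVec_star_mulVec (v x : n → 𝕜) :
    star x ⬝ᵥ vecMulVec v (star v) *ᵥ x = (‖star v ⬝ᵥ x‖ ^ 2 : ℝ) := by
  rw [vecMulVec_mulVec, op_smul_eq_smul, dotProduct_smul, smul_eq_mul, RCLike.ofReal_pow,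
    ← RCLike.mul_conj, starRingEnd_apply, star_dotProduct, star_star, mul_comm]

theorem IsHermitian.posSemidef_sub_vecMulVec (hA : A.IsHermitian) {v : n → 𝕜}
    (hv : ∀ x, ‖star v ⬝ᵥ x‖ ^ 2 ≤ RCLike.re (star x ⬝ᵥ A *ᵥ x)) :
    (A - vecMulVec v (star v)).PosSemidef := by
  have hH : (A - vecMulVec v (star v)).IsHermitian :=
    hA.sub (posSemidef_vecMulVec_self_star v).isHermitian
  refine .of_dotProduct_mulVec_nonneg hH fun x =>
    RCLike.nonneg_iff.mpr ⟨?_, hH.im_star_dotProduct_mulVec_self x⟩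
  rw [sub_mulVec, dotProduct_sub, map_sub, star_dotProduct_vecMulVec_star_mulVec,
    RCLike.ofReal_re, sub_nonneg]
  exact hv x

/-- The paper's `w = (hᴴ A h)^{-1/2} A h`; it is `0` when `hᴴ A h = 0`, since `(√0)⁻¹ = 0`. -/
noncomputable def normalizedMulVec (A : Matrix n n 𝕜) (h : n → 𝕜) : n → 𝕜 :=
  (√(RCLike.re (star h ⬝ᵥ A *ᵥ h)))⁻¹ • A *ᵥ h

theorem PosSemidef.norm_star_normalizedMulVec_dotProduct_sq_le (hA : A.PosSemidef) (h x : n → 𝕜) :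
    ‖star (A.normalizedMulVec h) ⬝ᵥ x‖ ^ 2 ≤ RCLike.re (star x ⬝ᵥ A *ᵥ x) := by
  set c := RCLike.re (star h ⬝ᵥ A *ᵥ h)
  have hc : 0 ≤ c := hA.re_dotProduct_nonneg h
  have hdot : star (A *ᵥ h) ⬝ᵥ x = star h ⬝ᵥ A *ᵥ x := by
    rw [star_mulVec, hA.isHermitian.eq, ← dotProduct_mulVec]
  calc ‖star (A.normalizedMulVec h) ⬝ᵥ x‖ ^ 2 = c⁻¹ * ‖star h ⬝ᵥ A *ᵥ x‖ ^ 2 := by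
        rw [normalizedMulVec, star_smul, star_trivial, smul_dotProduct, hdot, norm_smul, mul_pow,
          Real.norm_eq_abs, sq_abs, inv_pow, Real.sq_sqrt hc]
    _ ≤ RCLike.re (star x ⬝ᵥ A *ᵥ x) :=
        inv_mul_le_of_le_mul₀ hc (hA.re_dotProduct_nonneg x) (hA.norm_dotProduct_mulVec_sq_le h x)

theorem PosSemidef.sub_vecMulVec_normalizedMulVec (hA : A.PosSemidef) (h : n → 𝕜) :
    (A - vecMulVec (A.normalizedMulVec h) (star (A.normalizedMulVec h))).PosSemidef :=
  hA.isHermitian.posSemidef_sub_vecMulVec (hA.norm_star_normalizedMulVec_dotProduct_sq_le h)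

theorem of_mul_conjTranspose_eq_sum_vecMulVec {ι : Type*} [Fintype ι] (w : ι → m → 𝕜) :
    (of fun i k => w k i) * (of fun i k => w k i)ᴴ = ∑ k, vecMulVec (w k) (star (w k)) := by
  ext i j
  simp [mul_apply, vecMulVec_apply, sum_apply]

open scoped MatrixOrder in
theorem PosSemidef.exists_eq_mul_conjTranspose [DecidableEq n] (hA : A.PosSemidef) :
    ∃ B : Matrix n n 𝕜, A = B * Bᴴ :=
  CStarAlgebra.nonneg_iff_eq_mul_star_self.mp hA.nonneg

end Matrix

theorem radar_covariance_factorization_general {M K : ℕ}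
    (R : Matrix (Fin M) (Fin M) ℂ)
    (Rk : Fin K → Matrix (Fin M) (Fin M) ℂ)
    (hRk : ∀ k, (Rk k).PosSemidef)
    (hsum : (R - ∑ k, Rk k).PosSemidef)
    (h : Fin K → (Fin M → ℂ)) :
    let w : Fin K → (Fin M → ℂ) := fun k =>
      (Real.sqrt ((star (h k) ⬝ᵥ (Rk k).mulVec (h k)).re))⁻¹ • (Rk k).mulVec (h k)
    let Wc : Matrix (Fin M) (Fin K) ℂ := Matrix.of fun i k => w k i
    (R - Wc * Wcᴴ).PosSemidef ∧
    ∃ Wr : Matrix (Fin M) (Fin M) ℂ, R - Wc * Wcᴴ = Wr * Wrᴴ := by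
  intro w Wc
  have hdecomp : R - Wc * Wcᴴ =
      (R - ∑ k, Rk k) + ∑ k, (Rk k - vecMulVec (w k) (star (w k))) := by
    rw [of_mul_conjTranspose_eq_sum_vecMulVec, Finset.sum_sub_distrib]
    abel
  have hpsd : (R - Wc * Wcᴴ).PosSemidef := hdecomp ▸
    hsum.add (posSemidef_sum _ fun k _ => (hRk k).sub_vecMulVec_normalizedMulVec (h k))
  exact ⟨hpsd, hpsd.exists_eq_mul_conjTranspose⟩

/-- If `R − Σ R_k` is PSD, then with `W_c` built from the normalized columns
`w_k = (h_kᴴ R_k h_k)^{-1/2} R_k h_k`, the matrix `R − W_c W_cᴴ` is PSD and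
factors as `W_r W_rᴴ` for some square `W_r`. -/
theorem radar_covariance_factorization {M K : ℕ}
    (R : Matrix (Fin M) (Fin M) ℂ) (hRpsd : R.PosSemidef)
    (Rk : Fin K → Matrix (Fin M) (Fin M) ℂ)
    (hRk : ∀ k, (Rk k).PosSemidef)
    (hsum : (R - ∑ k, Rk k).PosSemidef)
    (h : Fin K → (Fin M → ℂ))
    (hh : ∀ k, star (h k) ⬝ᵥ (Rk k).mulVec (h k) ≠ 0) :
    let w : Fin K → (Fin M → ℂ) := fun k =>
      (Real.sqrt ((star (h k) ⬝ᵥ (Rk k).mulVec (h k)).re))⁻¹ • (Rk k).mulVec (h k)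
    let Wc : Matrix (Fin M) (Fin K) ℂ := Matrix.of fun i k => w k i
    (R - Wc * Wcᴴ).PosSemidef ∧
    ∃ Wr : Matrix (Fin M) (Fin M) ℂ, R - Wc * Wcᴴ = Wr * Wrᴴ :=
  radar_covariance_factorization_general R Rk hRk hsum h
end

section
/- (Theorem 1, 'only if' direction) Suppose R, R_1,…,R_{K_c} are Hermitian PSD M×M matrices with R − Σ_k R_k PSD, [R]_{mm} = 1 for all m, ξ'_{oc}(R, R_k, k) ≥ Γ_c > 0 for all k, and ξ'_{or}(R, Σ_k R_k, θ, ξ_{ir}) ≥ Γ_r for all θ ∈ Θ. Then, setting w_k = (h_k^H R_k h_k)^{-1/2} R_k h_k (well-defined since Γ_c > 0 forces h_k^H R_k h_k > 0), W_c = [w_1,…,w_{K_c}], and choosing W_r with W_r W_r^H = R − W_c W_c^H (which is PSD), the precoders satisfy: [W_c W_c^H + W_r W_r^H]_{mm} = 1 for all m; the communication SINR N_c^k |h_k^H w_k|²/(Σ_{j≠k} |h_k^H w_j|² + σ_k²/P_e) is at least Γ_c for all k; and the radar SINR N_r M ξ_{ir} a(θ)^H W_r W_r^H a(θ)/(M ξ_{ir}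 a(θ)^H W_c W_c^H a(θ) + 1) is at least Γ_r for all θ ∈ Θ. -/
open Matrix ComplexOrder

/-- Covariance-form communication SINR. -/
noncomputable def xiOC {M : ℕ} (Nc σ2 Pe : ℝ) (h : Fin M → ℂ)
    (R Rk : Matrix (Fin M) (Fin M) ℂ) : ℝ :=
  Nc * (star h ⬝ᵥ Rk.mulVec h).re /
    ((star h ⬝ᵥ R.mulVec h).re - (star h ⬝ᵥ Rk.mulVec h).re + σ2 / Pe)

/-- Covariance-form radar SINR. -/
noncomputable def xiOR {M : ℕ} (Nr ξ : ℝ) (a : Fin M → ℂ)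
    (R S : Matrix (Fin M) (Fin M) ℂ) : ℝ :=
  Nr * (M : ℝ) * ξ * (star a ⬝ᵥ (R - S).mulVec a).re /
    ((M : ℝ) * ξ * (star a ⬝ᵥ S.mulVec a).re + 1)

/- ### Auxiliary lemmas -/

open scoped MatrixOrder in
noncomputable def Matrix.PosSemidef.sqrt {n : Type*} [Fintype n] [DecidableEq n]
    {A : Matrix n n ℂ} (_hA : A.PosSemidef) : Matrix n n ℂ := CFC.sqrt A

open scoped MatrixOrder in
theorem Matrix.PosSemidef.posSemidef_sqrt {n : Type*} [Fintype n] [DecidableEq n]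
    {A : Matrix n n ℂ} (hA : A.PosSemidef) : hA.sqrt.PosSemidef :=
  (CFC.sqrt_nonneg A).posSemidef

open scoped MatrixOrder in
theorem Matrix.PosSemidef.sqrt_mul_self {n : Type*} [Fintype n] [DecidableEq n]
    {A : Matrix n n ℂ} (hA : A.PosSemidef) : hA.sqrt * hA.sqrt = A :=
  CFC.sqrt_mul_sqrt_self A hA.nonneg

theorem psd_sum {n ι : Type*} [Fintype n] (s : Finset ι)
    (f : ι → Matrix n n ℂ) (hf : ∀ i ∈ s, (f i).PosSemidef) :
    (∑ i ∈ s, f i).PosSemidef :=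
  Finset.sum_induction f _ (fun _ _ ha hb => ha.add hb) .zero hf

theorem psd_re_nonneg {n : Type*} [Fintype n] {A : Matrix n n ℂ}
    (hA : A.PosSemidef) (x : n → ℂ) : 0 ≤ (star x ⬝ᵥ A *ᵥ x).re := by
  have h0 := hA.dotProduct_mulVec_nonneg x
  rw [Complex.nonneg_iff] at h0
  exact h0.1

theorem sum_mulVec' {n ι : Type*} [Fintype n] [Fintype ι] (f : ι → Matrix n n ℂ)
    (x : n → ℂ) : (∑ i, f i) *ᵥ x = ∑ i, (f i) *ᵥ x := by
  ext i
  simp [mulVec, dotProduct, Matrix.sum_apply, Finset.sum_mul]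
  rw [Finset.sum_comm]

theorem dotProduct_sum' {n ι : Type*} [Fintype n] [Fintype ι] (v : n → ℂ)
    (f : ι → (n → ℂ)) : v ⬝ᵥ (∑ i, f i) = ∑ i, v ⬝ᵥ f i := by
  simp only [dotProduct, Finset.sum_apply, Finset.mul_sum]
  rw [Finset.sum_comm]

theorem psd_dot_real {n : Type*} [Fintype n] {A : Matrix n n ℂ}
    (hA : A.PosSemidef) (x : n → ℂ) :
    star x ⬝ᵥ A *ᵥ x = (((star x ⬝ᵥ A *ᵥ x).re : ℝ) : ℂ) := by
  have h0 := hA.dotProduct_mulVec_nonneg x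
  rw [Complex.nonneg_iff] at h0
  exact Complex.ext rfl (by simp [← h0.2])

theorem dot_self_mul_conjTranspose {m n : Type*} [Fintype m] [Fintype n]
    (B : Matrix m n ℂ) (x : m → ℂ) :
    star x ⬝ᵥ (B * Bᴴ) *ᵥ x = ((∑ j, ‖(star x ᵥ* B) j‖ ^ 2 : ℝ) : ℂ) := by
  rw [← mulVec_mulVec, dotProduct_mulVec]
  have h1 : Bᴴ *ᵥ x = star (star x ᵥ* B) := by
    ext j
    simp [mulVec, vecMul, dotProduct, conjTranspose, mul_comm, Finset.sum_comm]
  rw [h1]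
  simp only [dotProduct, Pi.star_apply, RCLike.star_def, RCLike.mul_conj]
  push_cast
  rfl

theorem re_dot_self_mul_conjTranspose {m n : Type*} [Fintype m] [Fintype n]
    (B : Matrix m n ℂ) (x : m → ℂ) :
    (star x ⬝ᵥ (B * Bᴴ) *ᵥ x).re = ∑ j, ‖(star x ᵥ* B) j‖ ^ 2 := by
  rw [dot_self_mul_conjTranspose]; exact Complex.ofReal_re _

theorem EuclideanSpace.inner_piLp_equiv_symm {n : Type*} [Fintype n] (x y : n → ℂ) :
    inner ℂ ((WithLp.equiv 2 (n → ℂ)).symm x) ((WithLp.equiv 2 (n → ℂ)).symm y)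
      = star x ⬝ᵥ y := by
  rw [dotProduct_comm]; rfl

theorem cs_psd {n : Type*} [Fintype n] [DecidableEq n] {A : Matrix n n ℂ}
    (hA : A.PosSemidef) (x y : n → ℂ) :
    ‖star x ⬝ᵥ A *ᵥ y‖ ^ 2 ≤ (star x ⬝ᵥ A *ᵥ x).re * (star y ⬝ᵥ A *ᵥ y).re := by
  set B := hA.sqrt with hBdef
  have hB : B * B = A := hA.sqrt_mul_self
  have hBh : Bᴴ = B := hA.posSemidef_sqrt.isHermitian
  have key : ∀ z w : n → ℂ, star z ⬝ᵥ A *ᵥ w = star (B *ᵥ z) ⬝ᵥ (B *ᵥ w) := by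
    intro z w
    rw [← hB, ← mulVec_mulVec, dotProduct_mulVec, star_mulVec, hBh]
  have hre : ∀ z : n → ℂ,
      (star z ⬝ᵥ A *ᵥ z).re = ‖((WithLp.equiv 2 (n → ℂ)).symm (B *ᵥ z))‖ ^ 2 := by
    intro z
    rw [key, ← EuclideanSpace.inner_piLp_equiv_symm, ← @inner_self_eq_norm_sq ℂ]
    rfl
  rw [key, ← EuclideanSpace.inner_piLp_equiv_symm, hre, hre, ← mul_pow]
  exact pow_le_pow_left₀ (norm_nonneg _) (norm_inner_le_norm _ _) 2

/-- Theorem 1, 'only if' direction: from a feasible solution of the covariance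
relaxation one recovers precoders satisfying the per-antenna power constraint
and achieving the communication SINR `Γ_c` and radar SINR `Γ_r`. -/
theorem precoders_of_covariance_relaxation
    {M Kc : ℕ} (Nr ξir Γr Γc Pe : ℝ)
    (hNr : 0 < Nr) (hξir : 0 < ξir) (hΓc : 0 < Γc) (hΓr : 0 ≤ Γr) (hPe : 0 < Pe)
    (Nc : Fin Kc → ℝ) (hNc : ∀ k, 0 < Nc k)
    (σ2 : Fin Kc → ℝ) (hσ2 : ∀ k, 0 < σ2 k)
    (h : Fin Kc → (Fin M → ℂ)) (Θ : Set ℝ) (a : ℝ → (Fin M → ℂ))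
    (R : Matrix (Fin M) (Fin M) ℂ)
    (Rk : Fin Kc → Matrix (Fin M) (Fin M) ℂ)
    (hR : R.PosSemidef) (hRk : ∀ k, (Rk k).PosSemidef)
    (hsum : (R - ∑ k, Rk k).PosSemidef)
    (hdiag : ∀ m : Fin M, R m m = 1)
    (hcomm : ∀ k, xiOC (Nc k) (σ2 k) Pe (h k) R (Rk k) ≥ Γc)
    (hradar : ∀ θ ∈ Θ, xiOR Nr ξir (a θ) R (∑ k, Rk k) ≥ Γr) :
    let w : Fin Kc → (Fin M → ℂ) := fun k =>
      (Real.sqrt ((star (h k) ⬝ᵥ (Rk k).mulVec (h k)).re))⁻¹ •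
        (Rk k).mulVec (h k)
    let Wc : Matrix (Fin M) (Fin Kc) ℂ := Matrix.of fun i k => w k i
    (R - Wc * Wcᴴ).PosSemidef ∧
    ∃ Wr : Matrix (Fin M) (Fin M) ℂ,
      Wr * Wrᴴ = R - Wc * Wcᴴ ∧
      (∀ m : Fin M, (Wc * Wcᴴ + Wr * Wrᴴ) m m = 1) ∧
      (∀ k : Fin Kc,
        Nc k * ‖star (h k) ⬝ᵥ w k‖ ^ 2 /
          ((∑ j ∈ Finset.univ.erase (Sum.inl k),
              ‖Matrix.vecMul (star (h k)) (Matrix.fromCols Wc Wr) j‖ ^ 2)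
            + σ2 k / Pe) ≥ Γc) ∧
      (∀ θ ∈ Θ,
        Nr * (M : ℝ) * ξir * (star (a θ) ⬝ᵥ (Wr * Wrᴴ).mulVec (a θ)).re /
          ((M : ℝ) * ξir *
              (star (a θ) ⬝ᵥ (Wc * Wcᴴ).mulVec (a θ)).re + 1) ≥ Γr) := by
  intro w Wc
  -- abbreviations
  set p : Fin Kc → ℝ := fun k => (star (h k) ⬝ᵥ (Rk k) *ᵥ (h k)).re with hp_def
  -- a few standing facts
  have hp_nonneg : ∀ k, 0 ≤ p k := fun k => psd_re_nonneg (hRk k) _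
  have hRmRk : ∀ k : Fin Kc, (R - Rk k).PosSemidef := by
    intro k
    have hsplit : R - Rk k = (R - ∑ j, Rk j) + ∑ j ∈ Finset.univ.erase k, Rk j := by
      rw [← Finset.add_sum_erase Finset.univ Rk (Finset.mem_univ k)]
      abel
    rw [hsplit]
    exact hsum.add (psd_sum _ _ fun j _ => hRk j)
  have hqp : ∀ k, p k ≤ (star (h k) ⬝ᵥ R *ᵥ (h k)).re := by
    intro k
    have := psd_re_nonneg (hRmRk k) (h k)
    rw [sub_mulVec, dotProduct_sub, Complex.sub_re] at this
    linarith
  have hden_pos : ∀ k, 0 < (star (h k) ⬝ᵥ R *ᵥ (h k)).re - p k + σ2 k / Pe := by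
    intro k
    have := hqp k
    have := div_pos (hσ2 k) hPe
    linarith
  have hp_pos : ∀ k, 0 < p k := by
    intro k
    have h1 : (0 : ℝ) < Nc k * p k / ((star (h k) ⬝ᵥ R *ᵥ (h k)).re - p k + σ2 k / Pe) :=
      lt_of_lt_of_le hΓc (hcomm k)
    nlinarith [mul_pos h1 (hden_pos k), hNc k, hp_nonneg k,
      div_mul_cancel₀ (Nc k * p k) (ne_of_gt (hden_pos k))]
  -- the inner product with w k
  have hw_def : ∀ k, w k = (Real.sqrt (p k))⁻¹ • (Rk k) *ᵥ (h k) := fun k => rfl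
  have hdot_w : ∀ (x : Fin Kc → ℂ) , True := fun _ => trivial
  have hWc_col : ∀ (x : Fin M → ℂ) (k : Fin Kc), (star x ᵥ* Wc) k = star x ⬝ᵥ w k := by
    intro x k; rfl
  -- ‖star x ⬝ᵥ w k‖² ≤ (star x ⬝ᵥ Rk k *ᵥ x).re, with equality p k when x = h k
  have hnorm_dot : ∀ (x : Fin M → ℂ) (k : Fin Kc),
      ‖star x ⬝ᵥ w k‖ ^ 2 = (Real.sqrt (p k))⁻¹ ^ 2 * ‖star x ⬝ᵥ (Rk k) *ᵥ (h k)‖ ^ 2 := by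
    intro x k
    rw [hw_def, dotProduct_smul]
    rw [norm_smul]
    rw [mul_pow, Real.norm_eq_abs, sq_abs]
  have hbound : ∀ (x : Fin M → ℂ) (k : Fin Kc),
      ‖star x ⬝ᵥ w k‖ ^ 2 ≤ (star x ⬝ᵥ (Rk k) *ᵥ x).re := by
    intro x k
    rw [hnorm_dot, inv_pow, Real.sq_sqrt (hp_nonneg k)]
    rw [inv_mul_le_iff₀ (hp_pos k), mul_comm]
    exact cs_psd (hRk k) x (h k)
  have hnorm_hk : ∀ k, ‖star (h k) ⬝ᵥ w k‖ ^ 2 = p k := by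
    intro k
    rw [hnorm_dot]
    have : star (h k) ⬝ᵥ (Rk k) *ᵥ (h k) = ((p k : ℝ) : ℂ) := psd_dot_real (hRk k) _
    rw [this, Complex.norm_real, Real.norm_eq_abs, sq_abs, inv_pow,
      Real.sq_sqrt (hp_nonneg k), sq, ← mul_assoc,
      inv_mul_cancel₀ (ne_of_gt (hp_pos k)), one_mul]
  -- quadratic form of Wc * Wcᴴ
  have hWcQF : ∀ x : Fin M → ℂ,
      star x ⬝ᵥ (Wc * Wcᴴ) *ᵥ x = ((∑ k, ‖star x ⬝ᵥ w k‖ ^ 2 : ℝ) : ℂ) := by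
    intro x
    rw [dot_self_mul_conjTranspose]
    norm_cast
  -- ∑ Rk - Wc * Wcᴴ is PSD
  have hSmWc : ((∑ k, Rk k) - Wc * Wcᴴ).PosSemidef := by
    apply PosSemidef.of_dotProduct_mulVec_nonneg
    · exact ((psd_sum _ _ fun j _ => hRk j).isHermitian).sub
        (posSemidef_self_mul_conjTranspose Wc).isHermitian
    · intro x
      rw [sub_mulVec, dotProduct_sub, hWcQF]
      have hS : star x ⬝ᵥ (∑ k, Rk k) *ᵥ x
          = ((∑ k, (star x ⬝ᵥ (Rk k) *ᵥ x).re : ℝ) : ℂ) := by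
        rw [sum_mulVec', dotProduct_sum']
        push_cast
        exact Finset.sum_congr rfl fun k _ => psd_dot_real (hRk k) x
      rw [hS, ← Complex.ofReal_sub, Complex.zero_le_real, sub_nonneg]
      exact Finset.sum_le_sum fun k _ => hbound x k
  -- R - Wc * Wcᴴ is PSD
  have hPSD : (R - Wc * Wcᴴ).PosSemidef := by
    have : R - Wc * Wcᴴ = (R - ∑ k, Rk k) + ((∑ k, Rk k) - Wc * Wcᴴ) :=
      (sub_add_sub_cancel _ _ _).symm
    rw [this]
    exact hsum.add hSmWc
  refine ⟨hPSD, hPSD.sqrt, ?_, ?_, ?_, ?_⟩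
  · rw [hPSD.posSemidef_sqrt.isHermitian]
    exact hPSD.sqrt_mul_self
  · intro m
    have hWr : hPSD.sqrt * hPSD.sqrtᴴ = R - Wc * Wcᴴ := by
      rw [hPSD.posSemidef_sqrt.isHermitian]; exact hPSD.sqrt_mul_self
    rw [hWr, add_sub_cancel]
    exact hdiag m
  · -- communication SINR
    intro k
    have hWr : hPSD.sqrt * hPSD.sqrtᴴ = R - Wc * Wcᴴ := by
      rw [hPSD.posSemidef_sqrt.isHermitian]; exact hPSD.sqrt_mul_self
    set Wr := hPSD.sqrt with hWr_def
    -- the full sum over all columns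
    have hfull : (∑ j : Fin Kc ⊕ Fin M,
        ‖(star (h k) ᵥ* (fromCols Wc Wr)) j‖ ^ 2)
        = (star (h k) ⬝ᵥ R *ᵥ (h k)).re := by
      rw [Fintype.sum_sum_type]
      have hcols : ∀ j, (star (h k) ᵥ* (fromCols Wc Wr)) (Sum.inl j)
          = (star (h k) ᵥ* Wc) j := by
        intro j; rw [vecMul_fromCols]; rfl
      have hcolsr : ∀ i, (star (h k) ᵥ* (fromCols Wc Wr)) (Sum.inr i)
          = (star (h k) ᵥ* Wr) i := by
        intro i; rw [vecMul_fromCols]; rfl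
      simp_rw [hcols, hcolsr]
      rw [← re_dot_self_mul_conjTranspose Wc (h k), ← re_dot_self_mul_conjTranspose Wr (h k),
        hWr]
      rw [sub_mulVec, dotProduct_sub, Complex.sub_re]
      ring
    have herase : (∑ j ∈ Finset.univ.erase (Sum.inl k),
        ‖(star (h k) ᵥ* (fromCols Wc Wr)) j‖ ^ 2)
        = (star (h k) ⬝ᵥ R *ᵥ (h k)).re - p k := by
      have hsplit : (∑ j ∈ Finset.univ.erase (Sum.inl k),
          ‖(star (h k) ᵥ* (fromCols Wc Wr)) j‖ ^ 2)
          + ‖(star (h k) ᵥ* (fromCols Wc Wr)) (Sum.inl k)‖ ^ 2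
          = ∑ j : Fin Kc ⊕ Fin M, ‖(star (h k) ᵥ* (fromCols Wc Wr)) j‖ ^ 2 :=
        Finset.sum_erase_add _ _ (Finset.mem_univ _)
      have hlk : ‖(star (h k) ᵥ* (fromCols Wc Wr)) (Sum.inl k)‖ ^ 2 = p k := by
        rw [vecMul_fromCols]
        show ‖(star (h k) ᵥ* Wc) k‖ ^ 2 = p k
        rw [hWc_col]
        exact hnorm_hk k
      rw [hlk] at hsplit
      linarith [hsplit, hfull]
    rw [herase, hnorm_hk k]
    have := hcomm k
    unfold xiOC at this
    exact this
  · -- radar SINR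
    intro θ hθ
    have hWr : hPSD.sqrt * hPSD.sqrtᴴ = R - Wc * Wcᴴ := by
      rw [hPSD.posSemidef_sqrt.isHermitian]; exact hPSD.sqrt_mul_self
    rw [hWr]
    set S : Matrix (Fin M) (Fin M) ℂ := ∑ k, Rk k with hS_def
    have h1 := hradar θ hθ
    unfold xiOR at h1
    set u : ℝ := (star (a θ) ⬝ᵥ (Wc * Wcᴴ) *ᵥ (a θ)).re with hu_def
    set v : ℝ := (star (a θ) ⬝ᵥ S *ᵥ (a θ)).re with hv_def
    set r : ℝ := (star (a θ) ⬝ᵥ R *ᵥ (a θ)).re with hr_def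
    have huv : u ≤ v := by
      have := psd_re_nonneg hSmWc (a θ)
      rw [sub_mulVec, dotProduct_sub, Complex.sub_re] at this
      linarith
    have hu0 : 0 ≤ u := psd_re_nonneg (posSemidef_self_mul_conjTranspose Wc) _
    have hrv : (star (a θ) ⬝ᵥ (R - S) *ᵥ (a θ)).re = r - v := by
      rw [sub_mulVec, dotProduct_sub, Complex.sub_re]
    have hru : (star (a θ) ⬝ᵥ (R - Wc * Wcᴴ) *ᵥ (a θ)).re = r - u := by
      rw [sub_mulVec, dotProduct_sub, Complex.sub_re]
    rw [hrv] at h1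
    rw [hru]
    have hrv0 : 0 ≤ r - v := by
      have := psd_re_nonneg hsum (a θ)
      rw [sub_mulVec, dotProduct_sub, Complex.sub_re] at this
      linarith
    have hMx : (0:ℝ) ≤ (M : ℝ) * ξir := mul_nonneg (Nat.cast_nonneg M) hξir.le
    have hd1 : (0:ℝ) < (M : ℝ) * ξir * u + 1 := by nlinarith [mul_nonneg hMx hu0]
    have hd2 : (0:ℝ) < (M : ℝ) * ξir * v + 1 := by
      nlinarith [mul_nonneg hMx (le_trans hu0 huv)]
    have hmono : Nr * (M:ℝ) * ξir * (r - v) / ((M:ℝ) * ξir * v + 1)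
        ≤ Nr * (M:ℝ) * ξir * (r - u) / ((M:ℝ) * ξir * u + 1) := by
      apply div_le_div₀
      · exact mul_nonneg (by positivity) (by linarith)
      · exact mul_le_mul_of_nonneg_left (by linarith) (by positivity)
      · exact hd1
      · have := mul_le_mul_of_nonneg_left huv hMx
        linarith
    linarith
end
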